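/- arXiv:2307.01883 — 5 statements merged into one kernel-verified Lean document; each statement's English description precedes it below -/
import Mathlib

section
/- Let E be a commutative ring, L a formal group law over E, and N ≥ 0. Let R be the quotient of E⟦D₀,…,D_N⟧ by the ideal generated by r_j := D_j² − D_j·L(−D₀,…,−D_{j−1},−D_{j+1},…,−D_N) for 0 ≤ j ≤ N. Then there exist power series f₀ = 1 and f_j ∈ E⟦D₀,…,D_N⟧ involving only the variables D₀,…,D_{j−1} (for 1 ≤ j ≤ N) such that, in R, L(D₀,…,D_N) = f₀·D₀ + f₁(D₀)·D₁ + f₂(D₀,D₁)·D₂ + ⋯ + f_N(D₀,…,D_{N−1})·D_N. -/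
open MvPowerSeries

open Classical in
/-- Substitution of a family of multivariate power series (with zero constant term)
into a multivariate power series with finitely many variables. -/
noncomputable def msubst {E : Type*} [CommRing E] {σ τ : Type*} [Fintype σ]
    (a : σ → MvPowerSeries τ E) (f : MvPowerSeries σ E) : MvPowerSeries τ E :=
  fun e =>
    ∑ d ∈ Finset.Icc (0 : σ →₀ ℕ)
        (Finsupp.equivFunOnFinite.symm fun _ : σ => e.sum fun _ n => n),
      MvPowerSeries.coeff d f * MvPowerSeries.coeff e (∏ i : σ, a i ^ d i)

/-- A (commutative, one-dimensional) formal group law over a commutative ring. -/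
def IsFormalGroupLaw {E : Type*} [CommRing E] (L : MvPowerSeries (Fin 2) E) : Prop :=
  msubst ![(X 0 : MvPowerSeries (Fin 2) E), 0] L = X 0 ∧
  msubst ![(0 : MvPowerSeries (Fin 2) E), X 1] L = X 1 ∧
  msubst ![(X 1 : MvPowerSeries (Fin 2) E), X 0] L = L ∧
  msubst ![msubst ![(X 0 : MvPowerSeries (Fin 3) E), X 1] L, X 2] L =
    msubst ![(X 0 : MvPowerSeries (Fin 3) E), msubst ![X 1, X 2] L] L

/-- The iterated formal sum `u₁ +_L u₂ +_L ⋯ +_L u_m`, bracketed from the left. -/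
noncomputable def fglIter {E : Type*} [CommRing E] (L : MvPowerSeries (Fin 2) E) {τ : Type*} :
    List (MvPowerSeries τ E) → MvPowerSeries τ E
  | [] => 0
  | a :: l => l.foldl (fun u v => msubst ![u, v] L) a

/-- The relation `r_j := D_j² − D_j · L(−D₀,…,−D_{j−1},−D_{j+1},…,−D_N)` in
`E⟦D₀,…,D_N⟧` (the `j`-th variable is omitted from the iterated formal sum of the
negated variables). -/
noncomputable def fglRel {E : Type*} [CommRing E] (L : MvPowerSeries (Fin 2) E) (N : ℕ)
    (j : Fin (N + 1)) : MvPowerSeries (Fin (N + 1)) E :=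
  X j ^ 2 -
    X j * fglIter L (List.ofFn fun i : Fin N =>
      -(X (j.succAbove i) : MvPowerSeries (Fin (N + 1)) E))

/-- The iterated formal sum `L(D₀,…,D_N)` of the variables of `E⟦D₀,…,D_N⟧`. -/
noncomputable def fglVarSum {E : Type*} [CommRing E] (L : MvPowerSeries (Fin 2) E) (N : ℕ) :
    MvPowerSeries (Fin (N + 1)) E :=
  fglIter L (List.ofFn fun i : Fin (N + 1) => (X i : MvPowerSeries (Fin (N + 1)) E))

/-! The linear part of an iterated formal sum is the plain sum, so
`rⱼ ≡ Xⱼ (X₀ + ⋯ + X_N)` up to terms of order three. Modulo the multiples of `∑ X`, every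
monomial is triangular: if `j` is its largest variable, `m` its part in the smaller variables
and `y = -(X₀ + ⋯ + X_{j-1})`, then the geometric sum `G = ∑_{k<a} Xⱼ^k y^(a-1-k)` gives
`m Xⱼ^(a+1) = m y^a Xⱼ + m G Xⱼ (Xⱼ - y)` with `Xⱼ - y = ∑ X - ∑_{i>j} Xᵢ`. Applying this to
the lowest homogeneous component and trading `Xᵢ ∑ X` for `rᵢ` raises the order of the
remainder by one; the corrections converge coefficientwise. The coefficient of `X₀` is then a
constant, read off from the linear terms. -/

open Filter Topology in
theorem eq_sum_tsum_mul_of_sub_succ_eq {α ι : Type*} [Ring α] [TopologicalSpace α]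
    [IsTopologicalRing α] [T2Space α] [Fintype ι] (g : ι → α) {r : ℕ → α}
    (hr : Tendsto r atTop (𝓝 0)) {b : ι → ℕ → α} (hb : ∀ i, Summable (b i))
    (hstep : ∀ n, r n - r (n + 1) = ∑ i, b i n * g i) :
    r 0 = ∑ i, (∑' n, b i n) * g i := by
  refine tendsto_nhds_unique (f := fun m => r 0 - r m) (l := atTop) ?_ ?_
  · simpa using tendsto_const_nhds.sub hr
  · have hpartial (m : ℕ) : ∑ n ∈ Finset.range m, ∑ i, b i n * g i = r 0 - r m := by
      simp only [← hstep]
      exact Finset.sum_range_sub' r m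
    simp only [← hpartial]
    exact (hasSum_sum fun i _ => (hb i).hasSum.mul_right (g i)).tendsto_sum_nat

namespace MvPowerSeries

variable {σ τ R : Type*} [CommRing R]

theorem msubst_eq_subst [Fintype σ] {a : σ → MvPowerSeries τ R}
    (ha : ∀ i, constantCoeff (a i) = 0) (f : MvPowerSeries σ R) : msubst a f = subst a f := by
  classical
  have hprod (d : σ →₀ ℕ) : (d.prod fun s n => a s ^ n) = ∏ i, a i ^ d i :=
    Finsupp.prod_fintype _ _ fun _ => pow_zero _
  ext e
  rw [coeff_subst (hasSubst_of_constantCoeff_zero ha), coeff_apply, msubst]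
  simp only [hprod, smul_eq_mul]
  symm
  apply finsum_eq_sum_of_support_subset
  intro d hd
  rw [Finset.coe_Icc, Set.mem_Icc]
  refine ⟨zero_le, Finsupp.le_def.2 fun i => not_lt.1 fun hi => hd ?_⟩
  simp only [Finsupp.equivFunOnFinite_symm_apply_apply] at hi
  dsimp only
  rw [← Finset.mul_prod_erase _ _ (Finset.mem_univ i)]
  refine mul_eq_zero_of_right _ (coeff_of_lt_order ?_)
  calc ((Finsupp.degree e : ℕ) : ℕ∞) < d i := by exact_mod_cast (hi : Finsupp.degree e < d i)
    _ ≤ (a i ^ d i).order := le_order_pow_of_constantCoeff_eq_zero _ (ha i)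
    _ ≤ _ := le_self_add.trans le_order_mul

theorem le_order_sum {ι : Type*} {s : Finset ι} {f : ι → MvPowerSeries σ R} {n : ℕ∞}
    (hf : ∀ i ∈ s, n ≤ (f i).order) : n ≤ (∑ i ∈ s, f i).order :=
  le_order fun d hd => by
    rw [map_sum]
    exact Finset.sum_eq_zero fun i hi => coeff_of_lt_order (hd.trans_le (hf i hi))

theorem le_order_mul_of_le {f g : MvPowerSeries σ R} {m n : ℕ} (hf : (m : ℕ∞) ≤ f.order)
    (hg : (n : ℕ∞) ≤ g.order) : ((m + n : ℕ) : ℕ∞) ≤ (f * g).order := by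
  rw [Nat.cast_add]
  exact (add_le_add hf hg).trans le_order_mul

theorem two_le_order_mul {f g : MvPowerSeries σ R} (hf : constantCoeff f = 0)
    (hg : constantCoeff g = 0) : 2 ≤ (f * g).order :=
  one_add_one_eq_two (R := ℕ∞) ▸ (add_le_add (one_le_order_iff_constCoeff_eq_zero.2 hf)
    (one_le_order_iff_constCoeff_eq_zero.2 hg)).trans le_order_mul

theorem one_le_order_sum_X [Fintype σ] : 1 ≤ (∑ i, X i : MvPowerSeries σ R).order :=
  one_le_order_iff_constCoeff_eq_zero.2 (by simp)

theorem coeff_eq_of_two_le_order_sub {p q : MvPowerSeries σ R} (h : 2 ≤ (p - q).order)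
    {d : σ →₀ ℕ} (hd : Finsupp.degree d ≤ 1) : coeff d p = coeff d q := by
  rw [← sub_eq_zero, ← map_sub]
  exact coeff_of_lt_order (lt_of_lt_of_le (by exact_mod_cast Nat.lt_succ_of_le hd) h)

theorem le_order_sub_homogeneousComponent {p : MvPowerSeries σ R} {n : ℕ}
    (hp : (n : ℕ∞) ≤ p.order) : ((n + 1 : ℕ) : ℕ∞) ≤ (p - homogeneousComponent n p).order := by
  refine le_order fun d hd => ?_
  rw [map_sub, coeff_homogeneousComponent]
  split_ifs with hdn
  · exact sub_self _
  · rw [coeff_of_lt_order (lt_of_lt_of_le ?_ hp), sub_zero]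
    have : Finsupp.degree d < n + 1 := by exact_mod_cast hd
    exact_mod_cast (by omega : Finsupp.degree d < n)

theorem coeff_single_one_sum_smul_X [Fintype σ] (c : σ → R) (i : σ) :
    coeff (Finsupp.single i 1) (∑ k, c k • X k : MvPowerSeries σ R) = c i := by
  classical
  simp [coeff_X, Finsupp.single_left_inj one_ne_zero]

theorem two_le_order_sub_linear [Fintype σ] (f : MvPowerSeries σ R) :
    2 ≤ (f - (C (constantCoeff f) + ∑ i, coeff (Finsupp.single i 1) f • X i)).order := by
  classical
  refine le_order fun d hd => ?_
  obtain hd0 | hd1 : Finsupp.degree d = 0 ∨ Finsupp.degree d = 1 := by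
    have : Finsupp.degree d < 2 := by exact_mod_cast hd
    omega
  · rw [Finsupp.degree_eq_zero_iff] at hd0
    subst hd0
    simp
  · obtain ⟨i, rfl⟩ : d ∈ Set.range (Finsupp.single · 1) := by
      rw [Finsupp.range_single_one]
      exact hd1
    rw [map_sub, map_add, coeff_single_one_sum_smul_X, coeff_C,
      if_neg (Finsupp.single_ne_zero.2 one_ne_zero), zero_add, sub_self]

theorem two_le_order_subst_sub_linear [Fintype σ] {a : σ → MvPowerSeries τ R}
    (ha : ∀ i, constantCoeff (a i) = 0) (f : MvPowerSeries σ R) :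
    2 ≤ (subst a f - (C (constantCoeff f) + ∑ i, coeff (Finsupp.single i 1) f • a i)).order := by
  have hs := hasSubst_of_constantCoeff_zero ha
  have hsubst : subst a f - (C (constantCoeff f) + ∑ i, coeff (Finsupp.single i 1) f • a i) =
      subst a (f - (C (constantCoeff f) + ∑ i, coeff (Finsupp.single i 1) f • X i)) := by
    rw [subst_sub hs, subst_add hs, subst_C, ← coe_substAlgHom hs, map_sum]
    simp only [map_smul, coe_substAlgHom, subst_X hs]
  rw [hsubst]
  refine le_trans ?_ (le_order_subst hs _)
  calc (2 : ℕ∞) = 1 * 2 := (one_mul 2).symm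
    _ ≤ _ := mul_le_mul' (le_iInf fun i => one_le_order_iff_constCoeff_eq_zero.2 (ha i))
        (two_le_order_sub_linear f)

variable (R) in
def supported (s : Set σ) : Subalgebra R (MvPowerSeries σ R) where
  carrier := {p | ∀ d, coeff d p ≠ 0 → ∀ i, d i ≠ 0 → i ∈ s}
  mul_mem' {p q} hp hq d hd i hi := by
    classical
    rw [coeff_mul] at hd
    obtain ⟨⟨x, y⟩, hxy, hne⟩ := Finset.exists_ne_zero_of_sum_ne_zero hd
    rw [Finset.HasAntidiagonal.mem_antidiagonal] at hxy
    subst hxy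
    by_cases hx : x i = 0
    · exact hq y (right_ne_zero_of_mul hne) i (by simpa [hx] using hi)
    · exact hp x (left_ne_zero_of_mul hne) i hx
  add_mem' {p q} hp hq d hd i hi := by
    rw [map_add] at hd
    by_cases hpd : coeff d p = 0
    · exact hq d (by simpa [hpd] using hd) i hi
    · exact hp d hpd i hi
  algebraMap_mem' r d hd i hi := by
    classical
    obtain rfl : d = 0 := by
      by_contra h
      exact hd (by simp [algebraMap_apply, coeff_C, h])
    exact absurd rfl hi

theorem supported_mono {s t : Set σ} (h : s ⊆ t) : supported R s ≤ supported R t :=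
  fun _ hp d hd i hi => h (hp d hd i hi)

theorem monomial_mem_supported {s : Set σ} {e : σ →₀ ℕ} (he : ∀ i, e i ≠ 0 → i ∈ s) (r : R) :
    monomial e r ∈ supported R s := by
  classical
  intro d hd
  rw [coeff_monomial] at hd
  obtain rfl : d = e := by
    by_contra h
    exact hd (if_neg h)
  exact he

theorem X_mem_supported {s : Set σ} {i : σ} (hi : i ∈ s) : X i ∈ supported R s :=
  monomial_mem_supported (fun _ hj => (Finsupp.single_apply_ne_zero.1 hj).1 ▸ hi) 1

theorem eq_C_of_mem_supported_empty {p : MvPowerSeries σ R} (hp : p ∈ supported R ∅) :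
    p = C (constantCoeff p) := by
  classical
  ext d
  rw [coeff_C]
  split_ifs with hd
  · rw [hd, coeff_zero_eq_constantCoeff_apply]
  · by_contra hne
    obtain ⟨i, hi⟩ : ∃ i, d i ≠ 0 := by simpa [Finsupp.ext_iff] using hd
    exact hp d hne i hi

section Approximation

open Filter Topology WithPiTopology

theorem tendsto_order_atTop_nhds_top_of_forall_le (c : ℕ) {f : ℕ → MvPowerSeries σ R}
    (hf : ∀ n, ((n - c : ℕ) : ℕ∞) ≤ (f n).order) :
    Tendsto (fun n => (f n).order) atTop (𝓝 ⊤) := by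
  refine ENat.tendsto_nhds_top_iff_natCast_lt.2 fun m =>
    eventually_atTop.2 ⟨m + c + 1, fun n hn => ?_⟩
  exact lt_of_lt_of_le (by exact_mod_cast (by omega : m < n - c)) (hf n)

variable [TopologicalSpace R] [DiscreteTopology R]

theorem tendsto_zero_of_tendsto_order {f : ℕ → MvPowerSeries σ R}
    (hf : Tendsto (fun n => (f n).order) atTop (𝓝 ⊤)) : Tendsto f atTop (𝓝 0) := by
  rw [tendsto_iff_coeff_tendsto]
  intro d
  rw [map_zero, nhds_discrete, tendsto_pure]
  filter_upwards [ENat.tendsto_nhds_top_iff_natCast_lt.1 hf (Finsupp.degree d)] with n hn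
  exact coeff_of_lt_order hn

theorem tsum_mem_supported {s : Set σ} {f : ℕ → MvPowerSeries σ R} (hsum : Summable f)
    (hf : ∀ n, f n ∈ supported R s) : ∑' n, f n ∈ supported R s := by
  intro d hd i hi
  rw [← (hsum.hasSum.map (coeff d) (continuous_coeff R d)).tsum_eq] at hd
  by_contra his
  refine hd ((tsum_congr fun n => ?_).trans tsum_zero)
  by_contra hn
  exact his (hf n d hn i hi)

end Approximation

open Filter Topology WithPiTopology in
theorem exists_eq_sum_mul_of_approx {ι : Type*} [Fintype ι]
    (g : ι → MvPowerSeries σ R) (s : ι → Set σ) (c : ℕ)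
    (happrox : ∀ (k : ℕ) (h : MvPowerSeries σ R), ((k + 1 : ℕ) : ℕ∞) ≤ h.order →
      ∃ a : ι → MvPowerSeries σ R,
        (∀ i, a i ∈ supported R (s i) ∧ ((k - c : ℕ) : ℕ∞) ≤ (a i).order) ∧
        ((k + 2 : ℕ) : ℕ∞) ≤ (h - ∑ i, a i * g i).order)
    {w : MvPowerSeries σ R} (hw : 1 ≤ w.order) :
    ∃ A : ι → MvPowerSeries σ R, (∀ i, A i ∈ supported R (s i)) ∧ w = ∑ i, A i * g i := by
  let _ : TopologicalSpace R := ⊥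
  have _ : DiscreteTopology R := ⟨rfl⟩
  -- made total, so that `choose` gives a function of `k` and `h` alone
  have happrox' : ∀ (k : ℕ) (h : MvPowerSeries σ R), ∃ a : ι → MvPowerSeries σ R,
      ((k + 1 : ℕ) : ℕ∞) ≤ h.order →
        (∀ i, a i ∈ supported R (s i) ∧ ((k - c : ℕ) : ℕ∞) ≤ (a i).order) ∧
        ((k + 2 : ℕ) : ℕ∞) ≤ (h - ∑ i, a i * g i).order := fun k h => by
    by_cases hh : ((k + 1 : ℕ) : ℕ∞) ≤ h.order
    · obtain ⟨a, ha⟩ := happrox k h hh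
      exact ⟨a, fun _ => ha⟩
    · exact ⟨0, fun h' => absurd h' hh⟩
  choose a ha using happrox'
  let rem : ℕ → MvPowerSeries σ R := fun n => Nat.rec w (fun k h => h - ∑ i, a k h i * g i) n
  have hrem : ∀ n, ((n + 1 : ℕ) : ℕ∞) ≤ (rem n).order := by
    intro n
    induction n with
    | zero => exact hw
    | succ n ih => exact (ha n (rem n) ih).2
  have hb : ∀ i n, a n (rem n) i ∈ supported R (s i) ∧
      ((n - c : ℕ) : ℕ∞) ≤ (a n (rem n) i).order :=
    fun i n => (ha n (rem n) (hrem n)).1 i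
  have hsum : ∀ i, Summable fun n => a n (rem n) i := fun i =>
    summable_of_tendsto_order_atTop_nhds_top
      (tendsto_order_atTop_nhds_top_of_forall_le c fun n => (hb i n).2)
  exact ⟨fun i => ∑' n, a n (rem n) i,
    fun i => tsum_mem_supported (hsum i) fun n => (hb i n).1,
    eq_sum_tsum_mul_of_sub_succ_eq g (tendsto_zero_of_tendsto_order
      (tendsto_order_atTop_nhds_top_of_forall_le 0 fun n => (hrem n).trans' (by norm_cast; omega)))
      hsum fun n => sub_sub_cancel _ _⟩

section Triangular

variable [LinearOrder σ] [Fintype σ]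

variable (R) in
def triangularDecomposable (k : ℕ) : Submodule R (MvPowerSeries σ R) where
  carrier := {p | ∃ t u : σ → MvPowerSeries σ R,
    (∀ i, t i ∈ supported R (Set.Iio i) ∧ (k : ℕ∞) ≤ (t i).order ∧
      ((k - 1 : ℕ) : ℕ∞) ≤ (u i).order) ∧
    p = ∑ i, t i * X i + ∑ i, u i * (X i * ∑ j, X j)}
  add_mem' := by
    rintro _ _ ⟨t, u, ht, rfl⟩ ⟨t', u', ht', rfl⟩
    refine ⟨t + t', u + u', fun i => ⟨add_mem (ht i).1 (ht' i).1, ?_, ?_⟩, ?_⟩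
    · exact (le_min (ht i).2.1 (ht' i).2.1).trans min_order_le_add
    · exact (le_min (ht i).2.2 (ht' i).2.2).trans min_order_le_add
    · simp only [Pi.add_apply, add_mul, Finset.sum_add_distrib]
      abel
  zero_mem' := ⟨0, 0, fun i => by simp, by simp⟩
  smul_mem' := by
    rintro r _ ⟨t, u, ht, rfl⟩
    refine ⟨r • t, r • u, fun i => ⟨Subalgebra.smul_mem _ (ht i).1 r, ?_, ?_⟩, ?_⟩
    · exact (ht i).2.1.trans le_order_smul
    · exact (ht i).2.2.trans le_order_smul
    · simp only [Pi.smul_apply, smul_add, Finset.smul_sum, smul_mul_assoc]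

theorem sum_X_eq_lt_add_X_add_gt (j : σ) :
    (∑ i, X i : MvPowerSeries σ R) =
      ∑ i ∈ Finset.univ.filter (· < j), X i + X j + ∑ i ∈ Finset.univ.filter (j < ·), X i := by
  calc (∑ i, X i : MvPowerSeries σ R)
      = ∑ i, ((if i < j then X i else 0) + (if i = j then X i else 0) +
          (if j < i then X i else 0)) := by
        refine Finset.sum_congr rfl fun i _ => ?_
        rcases lt_trichotomy i j with h | rfl | h
        · simp [h, h.ne, h.not_gt]
        · simp
        · simp [h, h.ne', h.not_gt]
    _ = _ := by simp [Finset.sum_add_distrib, Finset.sum_filter]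

theorem mul_X_pow_mem_triangularDecomposable {j : σ} {m : MvPowerSeries σ R}
    (hm : m ∈ supported R (Set.Iio j)) {b : ℕ} (hb : (b : ℕ∞) ≤ m.order) (a : ℕ) :
    m * X j ^ (a + 1) ∈ triangularDecomposable R (b + a) := by
  set y : MvPowerSeries σ R := -∑ i ∈ Finset.univ.filter (· < j), X i with hy_def
  set G := ∑ k ∈ Finset.range a, X j ^ k * y ^ (a - 1 - k)
  have hy : y ∈ supported R (Set.Iio j) :=
    neg_mem (Subalgebra.sum_mem _ fun i hi => X_mem_supported (Finset.mem_filter.1 hi).2)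
  have hy0 : constantCoeff y = 0 := by simp [hy_def]
  have hG : ((a - 1 : ℕ) : ℕ∞) ≤ G.order := le_order_sum fun k hk => by
    have hk := Finset.mem_range.1 hk
    have := le_order_mul_of_le (le_order_pow_of_constantCoeff_eq_zero k (constantCoeff_X j))
      (le_order_pow_of_constantCoeff_eq_zero (a - 1 - k) hy0)
    rwa [show k + (a - 1 - k) = a - 1 by omega] at this
  have hGj : G ∈ supported R (Set.Iic j) :=
    Subalgebra.sum_mem _ fun k _ => Subalgebra.mul_mem _
      (Subalgebra.pow_mem _ (X_mem_supported (Set.mem_Iic.2 le_rfl)) k)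
      (Subalgebra.pow_mem _ (supported_mono Set.Iio_subset_Iic_self hy) _)
  have hX : ((1 : ℕ) : ℕ∞) ≤ (X j : MvPowerSeries σ R).order := by
    exact_mod_cast one_le_order_iff_constCoeff_eq_zero.2 (constantCoeff_X j)
  refine ⟨fun i => if i = j then m * y ^ a else if j < i then -(m * G * X j) else 0,
    fun i => if i = j then m * G else 0, fun i => ?_, ?_⟩
  · dsimp only
    split_ifs with hij hji
    · subst hij
      refine ⟨Subalgebra.mul_mem _ hm (Subalgebra.pow_mem _ hy a),
        le_order_mul_of_le hb (le_order_pow_of_constantCoeff_eq_zero a hy0), ?_⟩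
      exact (le_order_mul_of_le hb hG).trans' (by norm_cast; omega)
    · refine ⟨neg_mem (Subalgebra.mul_mem _ (Subalgebra.mul_mem _
        (supported_mono (Set.Iio_subset_Iio hji.le) hm)
        (supported_mono (Set.Iic_subset_Iio.2 hji) hGj)) (X_mem_supported hji)), ?_, by simp⟩
      rw [order_neg]
      exact (le_order_mul_of_le (le_order_mul_of_le hb hG) hX).trans' (by norm_cast; omega)
    · simp
  · have ht : ∑ i, (if i = j then m * y ^ a else if j < i then -(m * G * X j) else 0) * X i =
        m * y ^ a * X j + -(m * G * X j) * ∑ i ∈ Finset.univ.filter (j < ·), X i := by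
      calc _ = ∑ i, ((if i = j then m * y ^ a * X i else 0) +
            (if j < i then -(m * G * X j) * X i else 0)) := by
            refine Finset.sum_congr rfl fun i _ => ?_
            split_ifs with h₁ h₂ h₂ <;> simp_all
        _ = _ := by simp [Finset.sum_add_distrib, Finset.sum_filter, Finset.mul_sum]
    have hu : ∑ i, (if i = j then m * G else 0) * (X i * ∑ i, X i) =
        m * G * (X j * ∑ i, (X i : MvPowerSeries σ R)) := by
      simp
    rw [ht, hu, sum_X_eq_lt_add_X_add_gt j]
    linear_combination -(m * X j) * geom_sum₂_mul (X j) y a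

theorem monomial_mem_triangularDecomposable {k : ℕ} {e : σ →₀ ℕ}
    (he : Finsupp.degree e = k + 1) (r : R) :
    monomial e r ∈ triangularDecomposable R k := by
  classical
  have hsupp : e.support.Nonempty := Finsupp.support_nonempty_iff.2 (by
    rintro rfl
    simp at he)
  set j := e.support.max' hsupp
  have hj : e j ≠ 0 := Finsupp.mem_support_iff.1 (e.support.max'_mem hsupp)
  have hlt : ∀ i, e.erase j i ≠ 0 → i ∈ Set.Iio j := fun i hi => by
    rw [Finsupp.erase_apply] at hi
    split_ifs at hi with hij
    · exact absurd rfl hi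
    · exact lt_of_le_of_ne (e.support.le_max' i (Finsupp.mem_support_iff.2 hi)) hij
  have hdeg : Finsupp.degree (e.erase j) + (e j - 1) = k := by
    have := congrArg Finsupp.degree (Finsupp.erase_add_single j e)
    rw [map_add, Finsupp.degree_single] at this
    omega
  have hmon : monomial e r = monomial (e.erase j) r * X j ^ (e j - 1 + 1) := by
    rw [Nat.sub_add_cancel (Nat.one_le_iff_ne_zero.2 hj), X_pow_eq, monomial_mul_monomial,
      mul_one, Finsupp.erase_add_single]
  rw [hmon, ← hdeg]
  refine mul_X_pow_mem_triangularDecomposable (monomial_mem_supported hlt r) ?_ _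
  rw [order_monomial]
  split_ifs <;> simp

theorem homogeneousComponent_mem_triangularDecomposable (k : ℕ) (p : MvPowerSeries σ R) :
    homogeneousComponent (k + 1) p ∈ triangularDecomposable R k := by
  have hsum : homogeneousComponent (k + 1) p =
      ∑ e ∈ Finset.finsuppAntidiag Finset.univ (k + 1), monomial e (coeff e p) := by
    ext d
    simp [coeff_homogeneousComponent, coeff_monomial, Finsupp.degree_eq_sum]
  rw [hsum]
  refine Submodule.sum_mem _ fun e he => monomial_mem_triangularDecomposable ?_ _
  rw [Finsupp.degree_eq_sum]
  exact (Finset.mem_finsuppAntidiag.1 he).1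

end Triangular

end MvPowerSeries

open MvPowerSeries

namespace IsFormalGroupLaw

variable {R τ : Type*} [CommRing R] {L : MvPowerSeries (Fin 2) R}

theorem low_degree_coeffs (hL : IsFormalGroupLaw L) :
    constantCoeff L = 0 ∧ coeff (Finsupp.single 0 1) L = 1 ∧
      coeff (Finsupp.single 1 1) L = 1 := by
  have h₀ := two_le_order_subst_sub_linear
    (a := ![(X 0 : MvPowerSeries (Fin 2) R), 0]) (by simp [Fin.forall_fin_two]) L
  have h₁ := two_le_order_subst_sub_linear
    (a := ![0, (X 1 : MvPowerSeries (Fin 2) R)]) (by simp [Fin.forall_fin_two]) L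
  rw [← msubst_eq_subst (by simp [Fin.forall_fin_two]), hL.1] at h₀
  rw [← msubst_eq_subst (by simp [Fin.forall_fin_two]), hL.2.1] at h₁
  have c₀ := coeff_eq_of_two_le_order_sub h₀ (d := 0) (by simp)
  have c₁ := coeff_eq_of_two_le_order_sub h₀ (d := Finsupp.single 0 1) (by simp)
  have c₂ := coeff_eq_of_two_le_order_sub h₁ (d := Finsupp.single 1 1) (by simp)
  simp [coeff_X, coeff_C, eq_comm (a := (0 : Fin 2 →₀ ℕ))] at c₀ c₁ c₂
  exact ⟨c₀.symm, c₁.symm, c₂.symm⟩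

theorem two_le_order_msubst_sub_add (hL : IsFormalGroupLaw L) {u v : MvPowerSeries τ R}
    (hu : constantCoeff u = 0) (hv : constantCoeff v = 0) :
    2 ≤ (msubst ![u, v] L - (u + v)).order := by
  obtain ⟨h₀, h₁, h₂⟩ := hL.low_degree_coeffs
  have hc : ∀ i, constantCoeff (![u, v] i) = 0 := Fin.forall_fin_two.2 ⟨hu, hv⟩
  simpa [msubst_eq_subst hc, h₀, h₁, h₂, Fin.sum_univ_two] using
    two_le_order_subst_sub_linear hc L

theorem two_le_order_foldl_msubst_sub (hL : IsFormalGroupLaw L) (l : List (MvPowerSeries τ R))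
    (hl : ∀ v ∈ l, constantCoeff v = 0) (u : MvPowerSeries τ R) (hu : constantCoeff u = 0) :
    2 ≤ (l.foldl (fun u v => msubst ![u, v] L) u - (u + l.sum)).order := by
  induction l generalizing u with
  | nil => simp
  | cons b l ih =>
    have hb := hl b List.mem_cons_self
    have hstep := hL.two_le_order_msubst_sub_add hu hb
    have hc : constantCoeff (msubst ![u, b] L) = 0 := by
      rw [← coeff_zero_eq_constantCoeff_apply, coeff_eq_of_two_le_order_sub hstep (by simp)]
      simp [hu, hb]
    have hrest := ih (fun v hv => hl v (List.mem_cons_of_mem b hv)) _ hc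
    rw [List.foldl_cons, List.sum_cons]
    calc (2 : ℕ∞) ≤ min _ _ := le_min hrest hstep
      _ ≤ _ := min_order_le_add.trans_eq (by congr 1; ring)

theorem two_le_order_fglIter_sub_sum (hL : IsFormalGroupLaw L) {l : List (MvPowerSeries τ R)}
    (hl : ∀ v ∈ l, constantCoeff v = 0) : 2 ≤ (fglIter L l - l.sum).order := by
  cases l with
  | nil => simp [fglIter]
  | cons a l =>
    simpa [fglIter] using hL.two_le_order_foldl_msubst_sub l
      (fun v hv => hl v (List.mem_cons_of_mem a hv)) a (hl a List.mem_cons_self)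

end IsFormalGroupLaw

section FglRel

variable {R : Type*} [CommRing R] {L : MvPowerSeries (Fin 2) R} {N : ℕ}

theorem two_le_order_fglVarSum_sub (hL : IsFormalGroupLaw L) :
    2 ≤ (fglVarSum L N - ∑ i, X i).order := by
  have h := hL.two_le_order_fglIter_sub_sum (l := List.ofFn fun i : Fin (N + 1) => X i) (by simp)
  rwa [List.sum_ofFn] at h

theorem three_le_order_X_mul_sum_X_sub_fglRel (hL : IsFormalGroupLaw L) (j : Fin (N + 1)) :
    3 ≤ (X j * ∑ i, X i - fglRel L N j).order := by
  have hs := hL.two_le_order_fglIter_sub_sum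
    (l := List.ofFn fun i : Fin N => -(X (j.succAbove i) : MvPowerSeries (Fin (N + 1)) R))
    (by simp)
  rw [List.sum_ofFn] at hs
  have hrel : X j * ∑ i, X i - fglRel L N j = X j * (fglIter L
      (List.ofFn fun i : Fin N => -(X (j.succAbove i) : MvPowerSeries (Fin (N + 1)) R)) -
      ∑ i : Fin N, -X (j.succAbove i)) := by
    rw [fglRel, Fin.sum_univ_succAbove _ j, Finset.sum_neg_distrib]
    ring
  rw [hrel]
  calc (3 : ℕ∞) = 1 + 2 := by norm_num
    _ ≤ _ := (add_le_add (one_le_order_iff_constCoeff_eq_zero.2 (constantCoeff_X j)) hs).trans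
      le_order_mul

theorem two_le_order_fglRel (hL : IsFormalGroupLaw L) (j : Fin (N + 1)) :
    2 ≤ (fglRel L N j).order := by
  rw [show fglRel L N j = X j * ∑ i, X i + -(X j * ∑ i, X i - fglRel L N j) by ring]
  refine (le_min ?_ ?_).trans min_order_le_add
  · exact two_le_order_mul (constantCoeff_X j) (by simp)
  · rw [order_neg]
    exact (three_le_order_X_mul_sum_X_sub_fglRel hL j).trans' (by norm_num)

theorem exists_triangular_approx_fglRel (hL : IsFormalGroupLaw L) (k : ℕ)
    (h : MvPowerSeries (Fin (N + 1)) R) (hh : ((k + 1 : ℕ) : ℕ∞) ≤ h.order) :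
    ∃ a : Fin (N + 1) ⊕ Fin (N + 1) → MvPowerSeries (Fin (N + 1)) R,
      (∀ i, a i ∈ supported R (Sum.elim Set.Iio (fun _ => Set.univ) i) ∧
        ((k - 1 : ℕ) : ℕ∞) ≤ (a i).order) ∧
      ((k + 2 : ℕ) : ℕ∞) ≤ (h - ∑ i, a i * Sum.elim X (fglRel L N) i).order := by
  obtain ⟨t, u, htu, hc⟩ := homogeneousComponent_mem_triangularDecomposable k h
  refine ⟨Sum.elim t u, ?_, ?_⟩
  · rintro (i | i)
    · exact ⟨(htu i).1, (htu i).2.1.trans' (by norm_cast; omega)⟩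
    · exact ⟨fun _ _ _ _ => Set.mem_univ _, (htu i).2.2⟩
  have hrem : h - ∑ i, Sum.elim t u i * Sum.elim X (fglRel L N) i =
      (h - homogeneousComponent (k + 1) h) +
        ∑ i, u i * (X i * ∑ j, X j - fglRel L N i) := by
    rw [Fintype.sum_sum_type, hc]
    simp only [Sum.elim_inl, Sum.elim_inr, mul_sub, Finset.sum_sub_distrib]
    ring
  rw [hrem]
  refine (le_min (le_order_sub_homogeneousComponent hh) (le_order_sum fun i _ => ?_)).trans
    min_order_le_add
  exact (le_order_mul_of_le (htu i).2.2 (n := 3)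
    (by exact_mod_cast three_le_order_X_mul_sum_X_sub_fglRel hL i)).trans' (by norm_cast; omega)

theorem eq_one_of_fglVarSum_eq (hL : IsFormalGroupLaw L)
    {f q : Fin (N + 1) → MvPowerSeries (Fin (N + 1)) R} (hf : f 0 ∈ supported R (Set.Iio 0))
    (h : fglVarSum L N = ∑ i, f i * X i + ∑ i, q i * fglRel L N i) : f 0 = 1 := by
  have hlin : 2 ≤ (fglVarSum L N - ∑ i, constantCoeff (f i) • X i).order := by
    have hsplit : fglVarSum L N - ∑ i, constantCoeff (f i) • X i =
        ∑ i, (f i - C (constantCoeff (f i))) * X i + ∑ i, q i * fglRel L N i := by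
      rw [h]
      simp only [sub_mul, Finset.sum_sub_distrib, smul_eq_C_mul]
      ring
    rw [hsplit]
    refine (le_min (le_order_sum fun i _ => ?_) (le_order_sum fun i _ => ?_)).trans
      min_order_le_add
    · exact two_le_order_mul (by simp) (constantCoeff_X i)
    · exact (two_le_order_fglRel hL i).trans (le_add_self.trans le_order_mul)
  have h₀ := coeff_eq_of_two_le_order_sub hlin (d := Finsupp.single 0 1) (by simp)
  rw [coeff_single_one_sum_smul_X,
    coeff_eq_of_two_le_order_sub (two_le_order_fglVarSum_sub hL) (by simp)] at h₀
  simp [coeff_X, Finsupp.single_left_inj one_ne_zero] at h₀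
  rw [eq_C_of_mem_supported_empty (supported_mono (fun i hi => absurd hi (Fin.not_lt_zero i)) hf),
    ← h₀, map_one]

end FglRel

/-- In the quotient `R` of `E⟦D₀,…,D_N⟧` by the ideal generated by the
relations `r_j`, the iterated formal sum `L(D₀,…,D_N)` can be written as
`f₀·D₀ + f₁(D₀)·D₁ + ⋯ + f_N(D₀,…,D_{N−1})·D_N` with `f₀ = 1` and `f_j` involving only
the variables `D₀,…,D_{j−1}`. -/
theorem exists_triangular_decomposition_of_fglVarSum
    {E : Type*} [CommRing E] (L : MvPowerSeries (Fin 2) E) (hL : IsFormalGroupLaw L) (N : ℕ) :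
    ∃ f : Fin (N + 1) → MvPowerSeries (Fin (N + 1)) E,
      f 0 = 1 ∧
      (∀ j : Fin (N + 1), ∀ d : Fin (N + 1) →₀ ℕ,
          MvPowerSeries.coeff d (f j) ≠ 0 → ∀ i : Fin (N + 1), d i ≠ 0 → i < j) ∧
      Ideal.Quotient.mk (Ideal.span (Set.range (fglRel L N))) (fglVarSum L N) =
        Ideal.Quotient.mk (Ideal.span (Set.range (fglRel L N)))
          (∑ j : Fin (N + 1), f j * X j) := by
  have hw : 1 ≤ (fglVarSum L N).order := by
    rw [← sub_add_cancel (fglVarSum L N) (∑ i, X i)]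
    exact (le_min (one_le_two.trans (two_le_order_fglVarSum_sub hL)) one_le_order_sum_X).trans
      min_order_le_add
  obtain ⟨A, hA, hsum⟩ := exists_eq_sum_mul_of_approx _ _ 1 (exists_triangular_approx_fglRel hL) hw
  rw [Fintype.sum_sum_type] at hsum
  simp only [Sum.elim_inl, Sum.elim_inr] at hsum
  refine ⟨fun j => A (.inl j), eq_one_of_fglVarSum_eq hL (hA (.inl 0)) hsum,
    fun j => hA (.inl j), ?_⟩
  rw [Ideal.Quotient.eq, hsum, add_sub_cancel_left]
  exact Ideal.sum_mem _ fun i _ => Ideal.mul_mem_left _ _ (Ideal.subset_span ⟨i, rfl⟩)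
end

section
/- Let E be an integral domain and N ≥ 1. Suppose h ∈ E⟦D₀,…,D_N⟧ involves only the variables D₀,…,D_{N−1} (that is, h lies in the image of the canonical inclusion E⟦D₀,…,D_{N−1}⟧ → E⟦D₀,…,D_N⟧), and suppose that h·D_N belongs to the principal ideal of E⟦D₀,…,D_N⟧ generated by D₀ + D₁ + ⋯ + D_N. Then h = 0. -/
/-! Substituting `D_N ↦ -(D₀ + ⋯ + D_{N-1})` is a ring endomorphism of `E⟦D₀,…,D_N⟧` that kills
`D₀ + ⋯ + D_N` and fixes every series not involving `D_N`. Applied to `h·D_N = g·(D₀ + ⋯ + D_N)`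
it gives `h·(D₀ + ⋯ + D_{N-1}) = 0`, and `E⟦D₀,…,D_N⟧` is a domain. -/

open MvPowerSeries

namespace MvPowerSeries

section Subst

variable {σ τ R S : Type*} [CommRing R] [CommRing S] [Algebra R S]

theorem subst_congr_of_coeff_ne_zero {a b : σ → MvPowerSeries τ S} (ha : HasSubst a)
    (hb : HasSubst b) {f : MvPowerSeries σ R}
    (hab : ∀ d, coeff d f ≠ 0 → ∀ s, d s ≠ 0 → a s = b s) :
    subst a f = subst b f := by
  ext e
  rw [coeff_subst ha, coeff_subst hb]
  refine finsum_congr fun d => ?_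
  by_cases hd : coeff d f = 0
  · simp [hd]
  · rw [Finsupp.prod_congr fun s hs => by rw [hab d hd s (Finsupp.mem_support_iff.mp hs)]]

end Subst

variable {σ R : Type*} [CommRing R]

theorem hasSubst_update_X [Finite σ] [DecidableEq σ] (i : σ) {q : MvPowerSeries σ R}
    (hq : constantCoeff q = 0) : HasSubst (Function.update X i q) :=
  hasSubst_of_constantCoeff_zero fun j => by
    rcases eq_or_ne j i with rfl | hj
    · rwa [Function.update_self]
    · rw [Function.update_of_ne hj, constantCoeff_X]

theorem subst_update_X_eq_self [DecidableEq σ] {i : σ} {q f : MvPowerSeries σ R}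
    (ha : HasSubst (Function.update X i q)) (hf : ∀ d, coeff d f ≠ 0 → d i = 0) :
    subst (Function.update X i q) f = f := by
  rw [subst_congr_of_coeff_ne_zero ha HasSubst.X fun d hd s hs =>
    Function.update_of_ne (fun hsi : s = i => hs (hsi ▸ hf d hd)) _ _, subst_self, id]

theorem apply_eq_zero_of_coeff_sum_X_ne_zero {i : σ} {s : Finset σ} (hi : i ∉ s)
    (d : σ →₀ ℕ) (hd : coeff d (∑ j ∈ s, X j : MvPowerSeries σ R) ≠ 0) : d i = 0 := by
  classical
  rw [map_sum] at hd
  obtain ⟨j, hj, hne⟩ := Finset.exists_ne_zero_of_sum_ne_zero hd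
  rw [coeff_X] at hne
  obtain rfl : d = Finsupp.single j 1 := by_contra fun h => hne (if_neg h)
  exact Finsupp.single_eq_of_ne (by rintro rfl; exact hi hj)

theorem sum_X_ne_zero [Nontrivial R] {s : Finset σ} (hs : s.Nonempty) :
    (∑ j ∈ s, X j : MvPowerSeries σ R) ≠ 0 := by
  classical
  obtain ⟨i, hi⟩ := hs
  intro h0
  have := congrArg (coeff (Finsupp.single i 1)) h0
  simp [map_sum, coeff_X, Finsupp.single_left_inj, hi] at this

theorem mul_eq_zero_of_mul_X_mem_span_X_add [DecidableEq σ] {i : σ} {q f : MvPowerSeries σ R}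
    (ha : HasSubst (Function.update X i (-q))) (hq : ∀ d, coeff d q ≠ 0 → d i = 0)
    (hf : ∀ d, coeff d f ≠ 0 → d i = 0) (hmem : f * X i ∈ Ideal.span {X i + q}) :
    f * q = 0 := by
  obtain ⟨g, hg⟩ := Ideal.mem_span_singleton'.mp hmem
  have := congrArg (substAlgHom (R := R) ha) hg
  simp only [map_mul, map_add, substAlgHom_apply, subst_X ha, Function.update_self,
    subst_update_X_eq_self ha hq, subst_update_X_eq_self ha hf, neg_add_cancel, mul_zero,
    mul_neg] at this
  exact neg_eq_zero.mp this.symm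

end MvPowerSeries

/-- Over an integral domain `E`, if `h ∈ E⟦D₀,…,D_N⟧` (with `N ≥ 1`)
involves only the variables `D₀,…,D_{N−1}` and `h·D_N` lies in the principal ideal
generated by `D₀ + D₁ + ⋯ + D_N`, then `h = 0`. -/
theorem eq_zero_of_mul_lastVar_mem_span_sum
    {E : Type*} [CommRing E] [IsDomain E] (N : ℕ) (hN : 1 ≤ N)
    (h : MvPowerSeries (Fin (N + 1)) E)
    (hvars : ∀ d : Fin (N + 1) →₀ ℕ,
      MvPowerSeries.coeff d h ≠ 0 → ∀ i : Fin (N + 1), d i ≠ 0 → (i : ℕ) < N)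
    (hmem : h * X (Fin.last N) ∈
      Ideal.span {(∑ i : Fin (N + 1), X i : MvPowerSeries (Fin (N + 1)) E)}) :
    h = 0 := by
  set s := Finset.univ.erase (Fin.last N)
  have hs : s.Nonempty :=
    ⟨Fin.castSucc ⟨0, hN⟩, Finset.mem_erase.mpr ⟨(Fin.castSucc_lt_last _).ne, Finset.mem_univ _⟩⟩
  have hh : ∀ d, coeff d h ≠ 0 → d (Fin.last N) = 0 := fun d hd =>
    by_contra fun hd' => (hvars d hd _ hd').ne (Fin.val_last N)
  have ha : HasSubst (Function.update X (Fin.last N) (-∑ j ∈ s, X j : MvPowerSeries _ E)) :=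
    hasSubst_update_X _ (by simp [map_sum, constantCoeff_X])
  rw [← Finset.add_sum_erase _ _ (Finset.mem_univ (Fin.last N))] at hmem
  have hprod := mul_eq_zero_of_mul_X_mem_span_X_add ha
    (apply_eq_zero_of_coeff_sum_X_ne_zero (Finset.notMem_erase _ _)) hh hmem
  exact (mul_eq_zero.mp hprod).resolve_right (sum_X_ne_zero hs)
end

section
/- Let E be an integral domain, N ≥ 1, and set s := D₀ + D₁ + ⋯ + D_N ∈ E⟦D₀,…,D_N⟧. Suppose that for each 1 ≤ j ≤ N, f_j ∈ E⟦D₀,…,D_N⟧ involves only the variables D₀,…,D_{j−1}, and that D₀ + f₁·D₁ + f₂·D₂ + ⋯ + f_N·D_N ≡ D₀ + D₁ + ⋯ + D_N modulo the ideal of E⟦D₀,…,D_N⟧ generated by the elements D_j·s for 0 ≤ j ≤ N. Then f_j = 1 for every 1 ≤ j ≤ N. -/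
/-!
Write the difference in the hypothesis as `g * s` with `g = ∑ cⱼ Dⱼ`, so that
`∑_{j ≥ 1} (fⱼ - 1) Dⱼ = g * s`. Every monomial of `(fⱼ - 1) Dⱼ` has `Dⱼ` as its highest
variable, with exponent exactly `1`; so `g * s` has no monomial whose highest variable occurs
to a power `≥ 2`. If `Dₖ` is the highest variable of a monomial `d`, the coefficient of
`g * s` at `d Dₖ` is `g_d` plus coefficients of `g` at the monomials `d Dₖ / Dᵢ` (`i < k`),
which carry one variable other than `Dₖ` less; induction on that count gives `g = 0`.
Then `fⱼ - 1` is read off from the coefficients of `∑ (fᵢ - 1) Dᵢ` at monomials with highest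
variable `Dⱼ`, all of which vanish.
-/

open MvPowerSeries

namespace MvPowerSeries

variable {σ R : Type*}

def OnlyVarsBelow [LT σ] [Semiring R] (j : σ) (φ : MvPowerSeries σ R) : Prop :=
  ∀ d : σ →₀ ℕ, coeff d φ ≠ 0 → ∀ i, d i ≠ 0 → i < j

theorem onlyVarsBelow_one [LT σ] [Semiring R] {j : σ} :
    OnlyVarsBelow j (1 : MvPowerSeries σ R) := by
  classical
  intro d hd i hi
  rw [coeff_one, if_neg fun h => hi (by simp [h])] at hd
  exact absurd rfl hd

theorem OnlyVarsBelow.sub [LT σ] [Ring R] {j : σ} {φ ψ : MvPowerSeries σ R}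
    (hφ : OnlyVarsBelow j φ) (hψ : OnlyVarsBelow j ψ) : OnlyVarsBelow j (φ - ψ) := by
  intro d hd
  rw [map_sub] at hd
  by_cases h : coeff d φ = 0
  · exact hψ d fun h' => hd (by rw [h, h', sub_zero])
  · exact hφ d h

def LinearInHighestVar [LT σ] [Semiring R] (ψ : MvPowerSeries σ R) : Prop :=
  ∀ (k : σ) (m : σ →₀ ℕ), 2 ≤ m k → (∀ l, k < l → m l = 0) → coeff m ψ = 0

section Semiring

variable [Semiring R]

theorem coeff_mul_X (m : σ →₀ ℕ) (φ : MvPowerSeries σ R) (i : σ) :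
    coeff m (φ * X i) =
      if Finsupp.single i 1 ≤ m then coeff (m - Finsupp.single i 1) φ else 0 := by
  rw [X_def, coeff_mul_monomial, mul_one]

theorem coeff_add_single_mul_X (d : σ →₀ ℕ) (φ : MvPowerSeries σ R) (i : σ) :
    coeff (d + Finsupp.single i 1) (φ * X i) = coeff d φ := by
  rw [X_def, coeff_add_mul_monomial, mul_one]

variable [LinearOrder σ]

theorem OnlyVarsBelow.top_of_coeff_mul_X_ne_zero {i : σ} {φ : MvPowerSeries σ R}
    (hφ : OnlyVarsBelow i φ) {m : σ →₀ ℕ} (hm : coeff m (φ * X i) ≠ 0) :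
    m i = 1 ∧ ∀ l, i < l → m l = 0 := by
  rw [coeff_mul_X, ite_ne_right_iff] at hm
  obtain ⟨hle, hm⟩ := hm
  have hmi : 1 ≤ m i := by simpa using hle i
  have below := hφ _ hm
  refine ⟨?_, fun l hl => ?_⟩
  · by_contra h
    exact lt_irrefl i (below i (by simp; omega))
  · by_contra h
    exact lt_asymm hl (below l (by simp [hl.ne, h]))

theorem coeff_add_single_sum_mul_X {P : Finset σ} {φ : σ → MvPowerSeries σ R}
    (hφ : ∀ i ∈ P, OnlyVarsBelow i (φ i)) {j : σ} (hj : j ∈ P) {d : σ →₀ ℕ}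
    (hd : ∀ i, d i ≠ 0 → i < j) :
    coeff (d + Finsupp.single j 1) (∑ i ∈ P, φ i * X i) = coeff d (φ j) := by
  rw [map_sum, Finset.sum_eq_single_of_mem j hj, coeff_add_single_mul_X]
  intro i hi hij
  by_contra hne
  obtain ⟨hmi, hmi_top⟩ := (hφ i hi).top_of_coeff_mul_X_ne_zero hne
  have hdj : d j = 0 := by_contra fun h => lt_irrefl j (hd j h)
  rcases lt_or_gt_of_ne hij with hlt | hgt
  · simpa [hdj] using hmi_top j hlt
  · have hdi : d i = 1 := by simpa [Finsupp.single_apply, hij.symm] using hmi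
    exact lt_asymm hgt (hd i (by omega))

theorem eq_zero_of_sum_mul_X_eq_zero {P : Finset σ} {φ : σ → MvPowerSeries σ R}
    (hφ : ∀ i ∈ P, OnlyVarsBelow i (φ i)) (hsum : ∑ i ∈ P, φ i * X i = 0) {j : σ}
    (hj : j ∈ P) : φ j = 0 := by
  ext d
  rw [map_zero]
  by_cases hd : ∀ i, d i ≠ 0 → i < j
  · rw [← coeff_add_single_sum_mul_X hφ hj hd, hsum, map_zero]
  · by_contra hne
    exact hd (hφ j hj d hne)

theorem linearInHighestVar_sum_mul_X {P : Finset σ} {φ : σ → MvPowerSeries σ R}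
    (hφ : ∀ i ∈ P, OnlyVarsBelow i (φ i)) : LinearInHighestVar (∑ i ∈ P, φ i * X i) := by
  intro k m hmk hm_top
  rw [map_sum]
  refine Finset.sum_eq_zero fun i hi => by_contra fun hne => ?_
  obtain ⟨hmi, hmi_top⟩ := (hφ i hi).top_of_coeff_mul_X_ne_zero hne
  rcases lt_trichotomy i k with hlt | rfl | hgt
  · have := hmi_top k hlt
    omega
  · omega
  · have := hm_top i hgt
    omega

end Semiring

section Fintype

variable [Fintype σ] [LinearOrder σ] [Semiring R] {φ : MvPowerSeries σ R}

theorem coeff_eq_zero_of_linearInHighestVar_mul_sum_X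
    (h : LinearInHighestVar (φ * ∑ i, X i)) (k : σ) (d : σ →₀ ℕ) (hdk : d k ≠ 0) (hd_top : ∀ l, k < l → d l = 0) :
    coeff d φ = 0 := by
  induction hn : ∑ l ∈ Finset.univ.erase k, d l using Nat.strong_induction_on generalizing d with
  | _ n ih =>
  have hmk : 2 ≤ (d + Finsupp.single k 1 : σ →₀ ℕ) k := by simp; omega
  have hm_top : ∀ l, k < l → (d + Finsupp.single k 1 : σ →₀ ℕ) l = 0 := fun l hl => by
    simp [hd_top l hl, hl.ne]
  have key := h k _ hmk hm_top
  rw [Finset.mul_sum, map_sum, Finset.sum_eq_single_of_mem k (Finset.mem_univ k),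
    coeff_add_single_mul_X] at key
  · exact key
  intro i _ hik
  rw [coeff_mul_X, ite_eq_right_iff]
  intro hle
  have hdi : 1 ≤ d i := by simpa [Finsupp.single_apply, hik] using hle i
  have hik_lt : i < k := lt_of_le_of_ne (not_lt.mp fun h => by simp [hd_top i h] at hdi) hik
  have happ : ∀ l, (d + Finsupp.single k 1 - Finsupp.single i 1 : σ →₀ ℕ) l =
      d l + (if k = l then 1 else 0) - (if i = l then 1 else 0) := fun l => by
    simp [Finsupp.single_apply]
  refine ih _ ?_ _ ?_ ?_ rfl
  · rw [← hn]
    refine Finset.sum_lt_sum (fun l hl => ?_) ⟨i, by simpa using hik, ?_⟩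
    · rw [happ, if_neg (Finset.ne_of_mem_erase hl).symm]
      omega
    · rw [happ, if_neg hik.symm, if_pos rfl]
      omega
  · rw [happ, if_pos rfl, if_neg hik]
    omega
  · intro l hl
    rw [happ, if_neg hl.ne, if_neg (hik_lt.trans hl).ne, hd_top l hl]

theorem eq_zero_of_linearInHighestVar_mul_sum_X (h0 : constantCoeff φ = 0)
    (h : LinearInHighestVar (φ * ∑ i, X i)) : φ = 0 := by
  ext d
  rw [map_zero]
  obtain rfl | hd := eq_or_ne d 0
  · simpa using h0
  have hsupp := Finsupp.support_nonempty_iff.mpr hd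
  refine coeff_eq_zero_of_linearInHighestVar_mul_sum_X h _ d
    (Finsupp.mem_support_iff.mp (d.support.max'_mem hsupp)) fun l hl => by_contra fun hne => ?_
  exact not_le.mpr hl (d.support.le_max' l (Finsupp.mem_support_iff.mpr hne))

end Fintype

theorem exists_mul_eq_of_mem_span_X_mul [Fintype σ] [CommSemiring R]
    {s x : MvPowerSeries σ R} (hx : x ∈ Ideal.span (Set.range fun j => X j * s)) :
    ∃ g, constantCoeff g = 0 ∧ g * s = x := by
  obtain ⟨c, rfl⟩ := Ideal.mem_span_range_iff_exists_fun.mp hx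
  refine ⟨∑ j, c j * X j, by simp, ?_⟩
  simp only [Finset.sum_mul, mul_assoc]

end MvPowerSeries

theorem correcting_series_unique_additive_general
    {E : Type*} [CommRing E] (N : ℕ)
    (f : Fin (N + 1) → MvPowerSeries (Fin (N + 1)) E)
    (hf : ∀ j : Fin (N + 1), 0 < j → ∀ d : Fin (N + 1) →₀ ℕ,
      MvPowerSeries.coeff d (f j) ≠ 0 → ∀ i : Fin (N + 1), d i ≠ 0 → i < j)
    (hsum :
      (X 0 + ∑ j ∈ Finset.univ.filter (fun j : Fin (N + 1) => 0 < j), f j * X j)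
          - (∑ j : Fin (N + 1), (X j : MvPowerSeries (Fin (N + 1)) E)) ∈
        Ideal.span (Set.range fun j : Fin (N + 1) =>
          (X j : MvPowerSeries (Fin (N + 1)) E) * ∑ i : Fin (N + 1), X i)) :
    ∀ j : Fin (N + 1), 0 < j → f j = 1 := by
  set P := Finset.univ.filter (fun j : Fin (N + 1) => 0 < j)
  have hφ : ∀ i ∈ P, OnlyVarsBelow i (f i - 1) := fun i hi =>
    OnlyVarsBelow.sub (hf i (Finset.mem_filter.mp hi).2) onlyVarsBelow_one
  obtain ⟨g, hg0, hgs⟩ := exists_mul_eq_of_mem_span_X_mul hsum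
  have hdiff : ∑ i ∈ P, (f i - 1) * X i = g * ∑ i, X i := by
    rw [hgs]
    simp [P, sub_mul, Finset.sum_filter, Fin.sum_univ_succ, Fin.succ_pos]
  have hg : g = 0 :=
    eq_zero_of_linearInHighestVar_mul_sum_X hg0 (hdiff ▸ linearInHighestVar_sum_mul_X hφ)
  rw [hg, zero_mul] at hdiff
  intro j hj
  exact sub_eq_zero.mp (eq_zero_of_sum_mul_X_eq_zero hφ hdiff (by simpa [P] using hj))

/-- Over an integral domain `E`, with `s = D₀ + ⋯ + D_N` (`N ≥ 1`): if each
`f_j` (for `1 ≤ j ≤ N`) involves only the variables `D₀,…,D_{j−1}` and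
`D₀ + f₁·D₁ + ⋯ + f_N·D_N ≡ D₀ + D₁ + ⋯ + D_N` modulo the ideal generated by the elements
`D_j·s` (`0 ≤ j ≤ N`), then `f_j = 1` for every `1 ≤ j ≤ N`. -/
theorem correcting_series_unique_additive
    {E : Type*} [CommRing E] [IsDomain E] (N : ℕ) (hN : 1 ≤ N)
    (f : Fin (N + 1) → MvPowerSeries (Fin (N + 1)) E)
    (hf : ∀ j : Fin (N + 1), 0 < j → ∀ d : Fin (N + 1) →₀ ℕ,
      MvPowerSeries.coeff d (f j) ≠ 0 → ∀ i : Fin (N + 1), d i ≠ 0 → i < j)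
    (hsum :
      (X 0 + ∑ j ∈ Finset.univ.filter (fun j : Fin (N + 1) => 0 < j), f j * X j)
          - (∑ j : Fin (N + 1), (X j : MvPowerSeries (Fin (N + 1)) E)) ∈
        Ideal.span (Set.range fun j : Fin (N + 1) =>
          (X j : MvPowerSeries (Fin (N + 1)) E) * ∑ i : Fin (N + 1), X i)) :
    ∀ j : Fin (N + 1), 0 < j → f j = 1 :=
  correcting_series_unique_additive_general N f hf hsum
end

section
/- Let H be a Lie group (a smooth finite-dimensional manifold with smooth group operations) acting continuously on a topological space Y, and suppose Y is metrizable, separable, and a Palais proper H-space. Let (U_i)_{i ∈ I} be an open cover of Y such that each U_i is H-invariant. Then there exists an H-equivariant partition of unity subordinate to this cover: a family of continuous functions ρ_i : Y → [0,1] such that ρ_i(h·y) = ρ_i(y) for all h ∈ H and y ∈ Y, the closed support of each ρ_i is contained in U_i, the family of supports is locally finite, and Σ_{i ∈ I} ρ_i(y) = 1 for every y ∈ Y. -/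
open scoped Manifold Pointwise

/-- `((U,V)) = {h ∈ H : hU ∩ V ≠ ∅}`. -/
def transporter (H : Type*) {Y : Type*} [SMul H Y] (U V : Set Y) : Set H :=
  {h : H | ∃ u ∈ U, h • u ∈ V}

/-- `U` is thin relative to `V` if `((U,V))` has compact closure in `H`. -/
def IsThinRel (H : Type*) {Y : Type*} [TopologicalSpace H] [SMul H Y] (U V : Set Y) : Prop :=
  IsCompact (closure (transporter H U V))

/-- `S` is a small subset if every point of `Y` admits a neighbourhood which is thin
relative to `S`. -/
def IsSmall (H : Type*) {Y : Type*} [TopologicalSpace H] [TopologicalSpace Y] [SMul H Y]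
    (S : Set Y) : Prop :=
  ∀ y : Y, ∃ U ∈ nhds y, IsThinRel H U S

/-- The action of `H` on `Y` is Palais proper if every point of `Y` admits a neighbourhood
which is a small subset. -/
def PalaisProper (H Y : Type*) [TopologicalSpace H] [TopologicalSpace Y] [SMul H Y] : Prop :=
  ∀ y : Y, ∃ U ∈ nhds y, IsSmall H U

/-! The orbit map `q : Y → Y/H` is open, and Palais properness makes it closed on closed subsets
`K` of small sets `S`: if `U` is a neighbourhood of `z` thin relative to `S`, then `H • K` meets
`U` only inside `L • K` for the compact set `L = closure ((U,S))⁻¹`, and a compact set times a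
closed set is closed. Hence `Y/H` is T₁, regular and second countable, so metrizable (Palais);
the invariant cover descends to the open cover `q '' U i` of `Y/H`, and composing a subordinate
partition of unity there with `q` gives the invariant one. -/

open Set MulAction Topology TopologicalSpace

section OrbitSpace

variable {H Y : Type*} [Group H] [MulAction H Y]

theorem inter_iUnion_smul_subset_inv_transporter_smul {U S K : Set Y} (hKS : K ⊆ S) :
    U ∩ ⋃ h : H, h • K ⊆ (transporter H U S)⁻¹ • K := by
  rintro _ ⟨hU, hK⟩
  obtain ⟨h, k, hk, rfl⟩ := mem_iUnion.1 hK
  exact ⟨h, ⟨h • k, hU, by rw [inv_smul_smul]; exact hKS hk⟩, k, hk, rfl⟩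

theorem quotient_mk_preimage_image_of_smul_eq {U : Set Y} (hU : ∀ h : H, h • U = U) :
    Quotient.mk (orbitRel H Y) ⁻¹' (Quotient.mk (orbitRel H Y) '' U) = U := by
  refine (quotient_preimage_image_eq_union_mul (G := H) U).trans ?_
  simp only [image_smul, hU, iUnion_const]

variable [TopologicalSpace H] [TopologicalSpace Y] [IsTopologicalGroup H] [ContinuousSMul H Y]

theorem IsSmall.isClosed_iUnion_smul {S K : Set Y} (hS : IsSmall H S) (hKS : K ⊆ S)
    (hK : IsClosed K) : IsClosed (⋃ h : H, h • K) := by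
  refine isClosed_of_closure_subset fun z hz => ?_
  obtain ⟨U, hU, hthin⟩ := hS z
  have hL : IsCompact (closure (transporter H U S)⁻¹) := by
    rw [← inv_closure]
    exact hthin.inv
  have hzL : z ∈ closure (closure (transporter H U S)⁻¹ • K) := by
    refine closure_mono ?_ (isOpen_interior.inter_closure ⟨mem_interior_iff_mem_nhds.2 hU, hz⟩)
    exact (inter_subset_inter_left _ interior_subset).trans
      ((inter_iUnion_smul_subset_inv_transporter_smul hKS).trans
        (smul_subset_smul_right subset_closure))
  obtain ⟨h, -, k, hk, rfl⟩ := (hK.smul_left_of_isCompact hL).closure_subset hzL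
  exact mem_iUnion.2 ⟨h, smul_mem_smul_set hk⟩

theorem IsSmall.isClosed_image_quotient_mk {S K : Set Y} (hS : IsSmall H S) (hKS : K ⊆ S)
    (hK : IsClosed K) : IsClosed (Quotient.mk (orbitRel H Y) '' K) := by
  rw [← (isOpenQuotientMap_quotientMk (Γ := H)).isQuotientMap.isClosed_preimage]
  convert hS.isClosed_iUnion_smul hKS hK using 1
  exact quotient_preimage_image_eq_union_mul K

theorem PalaisProper.t1Space_quotient [T1Space Y] (hY : PalaisProper H Y) :
    T1Space (Quotient (orbitRel H Y)) := by
  refine ⟨Quotient.ind fun y => ?_⟩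
  obtain ⟨S, hS, hSs⟩ := hY y
  simpa using hSs.isClosed_image_quotient_mk (singleton_subset_iff.2 (mem_of_mem_nhds hS))
    isClosed_singleton

theorem PalaisProper.regularSpace_quotient [RegularSpace Y] (hY : PalaisProper H Y) :
    RegularSpace (Quotient (orbitRel H Y)) := by
  have hq := isOpenQuotientMap_quotientMk (Γ := H) (T := Y)
  refine .of_exists_mem_nhds_isClosed_subset <| Quotient.ind fun y s hs => ?_
  obtain ⟨S, hS, hSs⟩ := hY y
  obtain ⟨C, ⟨hC, hCc⟩, hCs⟩ :=
    (closed_nhds_basis y).mem_iff.1 (Filter.inter_mem (hq.continuous.continuousAt hs) hS)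
  exact ⟨_, hq.isOpenMap.image_mem_nhds hC,
    hSs.isClosed_image_quotient_mk (hCs.trans inter_subset_right) hCc,
    (image_mono (hCs.trans inter_subset_left)).trans (image_preimage_subset _ _)⟩

theorem PalaisProper.metrizableSpace_quotient [MetrizableSpace Y] [SeparableSpace Y]
    (hY : PalaisProper H Y) : MetrizableSpace (Quotient (orbitRel H Y)) := by
  let := metrizableSpaceMetric Y
  have := UniformSpace.secondCountable_of_separable Y
  have := hY.t1Space_quotient
  have := hY.regularSpace_quotient
  have := ContinuousConstSMul.secondCountableTopology (Γ := H) (T := Y)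
  exact metrizableSpace_of_t3_secondCountable _

end OrbitSpace

/-- If a Lie group `H` acts continuously on a metrizable, separable,
Palais proper `H`-space `Y`, then every open cover of `Y` by `H`-invariant sets admits an
`H`-equivariant (continuous, locally finite) partition of unity subordinate to it. -/
theorem exists_equivariant_partition_of_unity
    {n : ℕ} {H : Type*} [TopologicalSpace H]
    [ChartedSpace (EuclideanSpace ℝ (Fin n)) H] [Group H] [LieGroup (𝓡 n) (⊤ : ℕ∞) H]
    {Y : Type*} [TopologicalSpace Y] [TopologicalSpace.MetrizableSpace Y]
    [TopologicalSpace.SeparableSpace Y] [MulAction H Y] [ContinuousSMul H Y]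
    (hY : PalaisProper H Y)
    {ι : Type*} (U : ι → Set Y) (hopen : ∀ i, IsOpen (U i))
    (hcover : ⋃ i, U i = Set.univ)
    (hinv : ∀ i, ∀ h : H, h • U i = U i) :
    ∃ ρ : ι → Y → ℝ,
      (∀ i, Continuous (ρ i)) ∧
      (∀ i y, ρ i y ∈ Set.Icc (0 : ℝ) 1) ∧
      (∀ i, ∀ h : H, ∀ y : Y, ρ i (h • y) = ρ i y) ∧
      (∀ i, tsupport (ρ i) ⊆ U i) ∧
      (LocallyFinite fun i => Function.support (ρ i)) ∧
      ∀ y, ∑ᶠ i, ρ i y = 1 := by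
  have := topologicalGroup_of_lieGroup (I := 𝓡 n) (n := (⊤ : ℕ∞)) (G := H)
  have hq := isOpenQuotientMap_quotientMk (Γ := H) (T := Y)
  have := hY.metrizableSpace_quotient
  let := metrizableSpaceMetric (Quotient (orbitRel H Y))
  obtain ⟨f, hf⟩ := PartitionOfUnity.exists_isSubordinate isClosed_univ
    (fun i => Quotient.mk (orbitRel H Y) '' U i) (fun i => hq.isOpenMap _ (hopen i))
    (by rw [← image_iUnion, hcover, image_univ_of_surjective hq.surjective])
  refine ⟨fun i => f i ∘ Quotient.mk (orbitRel H Y), fun i => (f i).continuous.comp hq.continuous,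
    fun i y => ⟨f.nonneg i _, f.le_one i _⟩, fun i h y => congrArg (f i) (Quotient.sound ⟨h, rfl⟩),
    fun i => ?_, ?_, fun y => f.sum_eq_one (mem_univ _)⟩
  · rw [← quotient_mk_preimage_image_of_smul_eq (hinv i)]
    exact (tsupport_comp_subset_preimage _ hq.continuous).trans (preimage_mono (hf i))
  · simpa only [Function.support_comp_eq_preimage]
      using f.locallyFinite.preimage_continuous hq.continuous
end

section
/- Let R = ℂ[x₁,…,x_k] be the polynomial ring in k ≥ 1 variables. For each nonempty subset S ⊆ {1,…,k} let I_S denote the ideal of R generated by {x_i : i ∈ S}. Then the complex of R-modules 0 → R/(x₁⋯x_k) → ⊕_{|S|=1} R/I_S → ⊕_{|S|=2} R/I_S → ⋯ → R/I_{{1,…,k}} → 0 is exact, where the first map has components the canonical quotient projections R/(x₁⋯x_k) → R/(x_i), and for 1 ≤ j < k the map ⊕_{|S|=j} R/I_S → ⊕_{|S′|=j+1} R/I_{S′} has (S,S′)-component equal to (−1)^p times the canonical projection R/I_S → R/I_{S′} when S ⊂ S′ (with p the position, in increasing order, of the unique element of S′∖S within S′) and equal to zero otherwise. -/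
open MvPolynomial

noncomputable section

/-- The polynomial ring `R = ℂ[x₁,…,x_k]`. -/
abbrev PolyC (k : ℕ) := MvPolynomial (Fin k) ℂ

/-- The ideal `I_S` of `R` generated by the variables `x_i` with `i ∈ S`. -/
def idealOf (k : ℕ) (S : Finset (Fin k)) : Ideal (PolyC k) :=
  Ideal.span ((fun i => (X i : PolyC k)) '' (S : Set (Fin k)))

/-- The principal ideal generated by `x₁⋯x_k`. -/
def prodIdeal (k : ℕ) : Ideal (PolyC k) :=
  Ideal.span {∏ i : Fin k, (X i : PolyC k)}

lemma prod_mem_idealOf {k : ℕ} {S : Finset (Fin k)} (hS : S.Nonempty) :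
    (∏ i : Fin k, (X i : PolyC k)) ∈ idealOf k S := by
  obtain ⟨s, hs⟩ := hS
  have hXs : (X s : PolyC k) ∈ idealOf k S :=
    Ideal.subset_span ⟨s, by exact_mod_cast hs, rfl⟩
  rw [← Finset.mul_prod_erase Finset.univ (fun i => (X i : PolyC k)) (Finset.mem_univ s)]
  exact Ideal.mul_mem_right _ _ hXs

/-- For `a ∈ S′∖S` (a singleton when `S ⊂ S′` with `|S′| = |S| + 1`), the sum of the
positions, in increasing order, of the elements of `S′∖S` within `S′`. -/
def newElemPos {k : ℕ} (S S' : Finset (Fin k)) : ℕ :=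
  ∑ a ∈ S' \ S, (S'.filter fun b => b ≤ a).card

/-- The `(S,S′)`-component of the differential: `(−1)^p` times the canonical projection
`R/I_S → R/I_{S′}` when `S ⊆ S′`, and zero otherwise. -/
def compMap {k : ℕ} (S S' : Finset (Fin k)) :
    (PolyC k ⧸ idealOf k S) → (PolyC k ⧸ idealOf k S') :=
  if h : S ⊆ S' then
    fun x => (-1 : PolyC k ⧸ idealOf k S') ^ newElemPos S S' *
      Ideal.Quotient.factor (S := idealOf k S) (T := idealOf k S')
        (Ideal.span_mono (Set.image_mono (Finset.coe_subset.mpr h))) x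
  else fun _ => 0

/-- The `j`-th term `⊕_{|S| = j} R/I_S` of the complex. -/
abbrev Cmod (k j : ℕ) :=
  ∀ S : {S : Finset (Fin k) // S.card = j}, PolyC k ⧸ idealOf k S.1

/-- The differential `⊕_{|S| = j} R/I_S → ⊕_{|S′| = j+1} R/I_{S′}` with components
`compMap`. -/
def dstep (k j : ℕ) : Cmod k j → Cmod k (j + 1) := fun c S' =>
  ∑ S : {S : Finset (Fin k) // S.card = j}, compMap S.1 S'.1 (c S)

/-- The first map `R/(x₁⋯x_k) → ⊕_{|S| = 1} R/I_S`, with components the canonical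
quotient projections. -/
def dzero (k : ℕ) : (PolyC k ⧸ prodIdeal k) → Cmod k 1 := fun x S =>
  Ideal.Quotient.factor (S := prodIdeal k) (T := idealOf k S.1)
    (by
      rw [prodIdeal, Ideal.span_le, Set.singleton_subset_iff]
      exact prod_mem_idealOf (Finset.card_pos.mp (by rw [S.2]; omega))) x

/-! Everything respects the monomial grading. At a monomial `μ` with set of absent variables `Z`,
the `μ`-coefficients of `⊕_{|S|=j} R/I_S` form `ℂ^{S ⊆ Z, |S| = j}`, those of `R/(x₁⋯x_k)` form `ℂ`
if `Z ≠ ∅` and `0` otherwise, and the complex becomes the augmented cochain complex of the full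
simplex on `Z`. For `Z ≠ ∅` this is contractible by the cone on the least vertex of `Z`, and these
cones, taken monomial by monomial, assemble into a contracting homotopy of polynomials. -/

open Finset

namespace SimplexCochain

variable {ι M : Type*} [LinearOrder ι] [AddCommGroup M]

/-- The position of `a` in `T`, counted from `1` in increasing order. -/
def pos (T : Finset ι) (a : ι) : ℕ := #{b ∈ T | b ≤ a}

lemma pos_eq_one {T : Finset ι} {v : ι} (hv : v ∈ T) (hmin : ∀ b ∈ T, v ≤ b) :
    pos T v = 1 := by
  rw [pos, card_eq_one]
  refine ⟨v, ext fun b => ?_⟩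
  simp only [mem_filter, mem_singleton]
  exact ⟨fun ⟨hb, hbv⟩ => le_antisymm hbv (hmin b hb), by rintro rfl; exact ⟨hv, le_rfl⟩⟩

lemma pos_insert {T : Finset ι} {v a : ι} (hv : v ∉ T) (hva : v ≤ a) :
    pos (insert v T) a = pos T a + 1 := by
  rw [pos, pos, filter_insert, if_pos hva,
    card_insert_of_notMem fun h => hv (mem_filter.mp h).1]

/-- The coboundary of the augmented cochain complex of the full simplex on `ι`, with cochains
indexed by finite sets of vertices. -/
def coboundary (f : Finset ι → M) (T : Finset ι) : M :=
  ∑ a ∈ T, (-1 : ℤ) ^ pos T a • f (T.erase a)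

def cone (v : ι) (f : Finset ι → M) (S : Finset ι) : M :=
  if v ∈ S then 0 else -f (insert v S)

lemma map_coboundary {N : Type*} [AddCommGroup N] (φ : M →+ N) (f : Finset ι → M)
    (T : Finset ι) : φ (coboundary f T) = coboundary (fun S => φ (f S)) T := by
  simp only [coboundary, map_sum, map_zsmul]

lemma map_cone {N : Type*} [AddCommGroup N] (φ : M →+ N) (v : ι) (f : Finset ι → M)
    (S : Finset ι) : φ (cone v f S) = cone v (fun T => φ (f T)) S := by
  unfold cone
  split_ifs <;> simp

lemma coboundary_insert_of_min {f : Finset ι → M} {T : Finset ι} {v : ι} (hv : v ∉ T)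
    (hmin : ∀ b ∈ T, v ≤ b) :
    coboundary f (insert v T) =
      -f T - ∑ a ∈ T, (-1 : ℤ) ^ pos T a • f (insert v (T.erase a)) := by
  rw [coboundary, sum_insert hv, pos_eq_one (mem_insert_self v T) (by simpa using hmin),
    erase_insert hv, sub_eq_add_neg, ← sum_neg_distrib]
  congr 1
  · simp
  · refine sum_congr rfl fun a ha => ?_
    rw [pos_insert hv (hmin a ha), erase_insert_of_ne (ne_of_mem_of_not_mem ha hv).symm,
      pow_succ, mul_neg_one, neg_smul]

theorem coboundary_cone_add_cone_coboundary {f : Finset ι → M} {T : Finset ι} {v : ι}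
    (hmin : ∀ b ∈ T, v ≤ b) : coboundary (cone v f) T + cone v (coboundary f) T = f T := by
  by_cases hv : v ∈ T
  · rw [cone, if_pos hv, add_zero, coboundary, sum_eq_single_of_mem v hv]
    · rw [cone, if_neg (notMem_erase v T), insert_erase hv, pos_eq_one hv hmin]
      simp
    · intro a _ hav
      rw [cone, if_pos (mem_erase.mpr ⟨hav.symm, hv⟩), smul_zero]
  · rw [cone, if_neg hv, coboundary_insert_of_min hv hmin, coboundary]
    have hcone : ∀ a ∈ T, cone v f (T.erase a) = -f (insert v (T.erase a)) :=
      fun a _ => if_neg fun h => hv (mem_of_mem_erase h)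
    rw [sum_congr rfl fun a ha => by rw [hcone a ha]]
    simp only [smul_neg, sum_neg_distrib]
    abel

theorem coboundary_coboundary (f : Finset ι → M) (T : Finset ι) :
    coboundary (coboundary f) T = 0 := by
  induction T using Finset.induction_on_min generalizing f with
  | empty => simp [coboundary]
  | insert v T hlt ih =>
    have hv : v ∉ T := fun h => lt_irrefl v (hlt v h)
    have hmin : ∀ b ∈ T, v ≤ b := fun b hb => (hlt b hb).le
    -- The cone identity on the faces of `T`, where `ih` kills `coboundary (coboundary (cone v f))`,
    -- and then on `T` itself leaves `cone v (coboundary (coboundary f)) T = 0`.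
    have hfaces : coboundary f T = coboundary (cone v (coboundary f)) T := by
      rw [← zero_add (coboundary (cone v _) T), ← ih (cone v f), coboundary, coboundary,
        coboundary, ← sum_add_distrib]
      refine sum_congr rfl fun a _ => ?_
      rw [← smul_add, coboundary_cone_add_cone_coboundary
        fun b hb => hmin b (mem_of_mem_erase hb)]
    have hT := coboundary_cone_add_cone_coboundary (f := coboundary f) hmin
    rw [← hfaces, add_eq_left, cone, if_neg hv, neg_eq_zero] at hT
    exact hT

end SimplexCochain

section Monomials

open SimplexCochain

variable {σ R : Type*} [CommRing R]

def restrictMonomials (P : (σ →₀ ℕ) → Prop) [DecidablePred P] (p : MvPolynomial σ R) :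
    MvPolynomial σ R :=
  AddMonoidAlgebra.ofCoeff ((AddMonoidAlgebra.coeff p).filter P)

lemma coeff_restrictMonomials (P : (σ →₀ ℕ) → Prop) [DecidablePred P] (p : MvPolynomial σ R)
    (μ : σ →₀ ℕ) : coeff μ (restrictMonomials P p) = if P μ then coeff μ p else 0 :=
  Finsupp.filter_apply _ _ _

lemma coeff_coboundary [LinearOrder σ] (c : Finset σ → MvPolynomial σ R) (T : Finset σ)
    (μ : σ →₀ ℕ) : coeff μ (coboundary c T) = coboundary (fun S => coeff μ (c S)) T :=
  map_coboundary (coeffAddMonoidHom μ) c T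

variable [Fintype σ]

def zeroSet (μ : σ →₀ ℕ) : Finset σ := {i | μ i = 0}

@[simp]
lemma mem_zeroSet {μ : σ →₀ ℕ} {i : σ} : i ∈ zeroSet μ ↔ μ i = 0 := by
  simp [zeroSet]

variable [LinearOrder σ]

open Classical in
/-- At each monomial `μ` this is the cone whose apex is the least variable absent from `μ`. -/
def leastZeroHomotopy (c : Finset σ → MvPolynomial σ R) (S : Finset σ) : MvPolynomial σ R :=
  ∑ v : σ, restrictMonomials (fun μ => IsLeast (zeroSet μ : Set σ) v) (cone v c S)

lemma coeff_leastZeroHomotopy {c : Finset σ → MvPolynomial σ R} {μ : σ →₀ ℕ} {v : σ}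
    (hv : IsLeast (zeroSet μ : Set σ) v) (S : Finset σ) :
    coeff μ (leastZeroHomotopy c S) = cone v (fun T => coeff μ (c T)) S := by
  classical
  rw [leastZeroHomotopy, coeff_sum, sum_eq_single v]
  · rw [coeff_restrictMonomials, if_pos hv]
    exact map_cone (coeffAddMonoidHom μ) v c S
  · intro w _ hwv
    rw [coeff_restrictMonomials, if_neg fun hw => hwv (hw.unique hv)]
  · exact fun h => absurd (mem_univ v) h

theorem coeff_coboundary_leastZeroHomotopy {c : Finset σ → MvPolynomial σ R} {S : Finset σ}
    {μ : σ →₀ ℕ} (hS : S.Nonempty) (hSμ : S ⊆ zeroSet μ)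
    (hcycle : ∀ T, #T = #S + 1 → T ⊆ zeroSet μ → coeff μ (coboundary c T) = 0) :
    coeff μ (coboundary (leastZeroHomotopy c) S) = coeff μ (c S) := by
  have hne : (zeroSet μ).Nonempty := hS.mono hSμ
  set v := (zeroSet μ).min' hne
  have hv : IsLeast (zeroSet μ : Set σ) v := isLeast_min' _ hne
  have hmin : ∀ b ∈ S, v ≤ b := fun b hb => hv.2 (hSμ hb)
  rw [coeff_coboundary, funext (coeff_leastZeroHomotopy hv),
    ← coboundary_cone_add_cone_coboundary (f := fun T => coeff μ (c T)) hmin, left_eq_add, cone]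
  split_ifs with hvS
  · rfl
  · rw [← coeff_coboundary, hcycle _ (card_insert_of_notMem hvS) (insert_subset hv.1 hSμ),
      neg_zero]

end Monomials

section KoszulComplex

open SimplexCochain

variable {k : ℕ}

lemma mk_idealOf_eq_mk_iff {S : Finset (Fin k)} {p q : PolyC k} :
    Ideal.Quotient.mk (idealOf k S) p = Ideal.Quotient.mk (idealOf k S) q ↔
      ∀ μ, S ⊆ zeroSet μ → coeff μ p = coeff μ q := by
  rw [Ideal.Quotient.eq, idealOf, mem_ideal_span_X_image]
  refine forall_congr' fun μ => ?_
  simp only [mem_support_iff, coeff_sub, sub_ne_zero, subset_iff, mem_zeroSet,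
    Finset.mem_coe]
  grind

lemma mem_prodIdeal_iff {p : PolyC k} :
    p ∈ prodIdeal k ↔ ∀ μ, (zeroSet μ).Nonempty → coeff μ p = 0 := by
  have hspan : prodIdeal k =
      Ideal.span ((fun s => monomial s (1 : ℂ)) '' {∑ i, Finsupp.single i 1}) := by
    rw [Set.image_singleton, monomial_sum_one]
    rfl
  rw [hspan, mem_ideal_span_monomial_image]
  refine forall_congr' fun μ => ?_
  simp [Finsupp.le_def, Finset.Nonempty, Finsupp.finsetSum_apply, Finsupp.single_apply,
    Nat.one_le_iff_ne_zero]
  grind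

def cmodMk (j : ℕ) (c : Finset (Fin k) → PolyC k) : Cmod k j :=
  fun S => Ideal.Quotient.mk _ (c S.1)

lemma exists_cmodMk_eq {j : ℕ} (x : Cmod k j) : ∃ c, cmodMk j c = x := by
  choose c hc using fun S => Ideal.Quotient.mk_surjective (x S)
  refine ⟨fun T => if h : #T = j then c ⟨T, h⟩ else 0, funext fun S => ?_⟩
  simp [cmodMk, S.2, hc]

lemma cmodMk_eq_cmodMk_iff {j : ℕ} {c c' : Finset (Fin k) → PolyC k} :
    cmodMk j c = cmodMk j c' ↔
      ∀ S, #S = j → ∀ μ, S ⊆ zeroSet μ → coeff μ (c S) = coeff μ (c' S) := by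
  simp only [funext_iff, cmodMk, mk_idealOf_eq_mk_iff, Subtype.forall]

lemma cmodMk_zero {j : ℕ} : cmodMk j (0 : Finset (Fin k) → PolyC k) = 0 :=
  funext fun _ => map_zero _

lemma compMap_mk {S S' : Finset (Fin k)} (h : S ⊆ S') (p : PolyC k) :
    compMap S S' (Ideal.Quotient.mk _ p) =
      Ideal.Quotient.mk _ ((-1 : ℤ) ^ newElemPos S S' • p) := by
  simp only [compMap, h, dite_true, zsmul_eq_mul, map_mul, map_intCast]
  push_cast
  rfl

lemma newElemPos_erase {S : Finset (Fin k)} {a : Fin k} (ha : a ∈ S) :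
    newElemPos (S.erase a) S = pos S a := by
  rw [newElemPos, sdiff_erase_self ha, sum_singleton, pos]

lemma dstep_cmodMk (j : ℕ) (c : Finset (Fin k) → PolyC k) :
    dstep k j (cmodMk j c) = cmodMk (j + 1) (coboundary c) := by
  funext S'
  have hfaces : dstep k j (cmodMk j c) S' =
      ∑ S ∈ univ.filter (fun S : {S : Finset (Fin k) // #S = j} => S.1 ⊆ S'.1),
        Ideal.Quotient.mk _ ((-1 : ℤ) ^ newElemPos S.1 S'.1 • c S.1) := by
    rw [sum_filter]
    refine sum_congr rfl fun S _ => ?_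
    split_ifs with h
    · exact compMap_mk h _
    · simp [compMap, h]
  rw [hfaces, cmodMk, coboundary, map_sum]
  symm
  refine sum_bij (fun a ha => ⟨S'.1.erase a, by rw [card_erase_of_mem ha, S'.2]; rfl⟩)
    (fun a _ => by simp [erase_subset]) (fun a ha b _ h => (erase_inj _ ha).mp congr($h.1))
    (fun S hS => ?_) (fun a ha => by simp [newElemPos_erase ha])
  obtain ⟨a, haS, hins⟩ := exists_eq_insert_iff.mpr ⟨(mem_filter.mp hS).2, by rw [S.2, S'.2]⟩
  exact ⟨a, hins ▸ mem_insert_self a _, Subtype.ext (by simp [← hins, erase_insert haS])⟩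

lemma dzero_mk (q : PolyC k) :
    dzero k (Ideal.Quotient.mk _ q) = dstep k 0 (cmodMk 0 fun _ => -q) := by
  rw [dstep_cmodMk]
  funext S
  obtain ⟨i, hi⟩ := card_eq_one.mp S.2
  simp [dzero, cmodMk, coboundary, hi, pos, filter_singleton]

lemma dstep_dstep {j : ℕ} (x : Cmod k j) : dstep k (j + 1) (dstep k j x) = 0 := by
  obtain ⟨c, rfl⟩ := exists_cmodMk_eq x
  rw [dstep_cmodMk, dstep_cmodMk]
  funext S
  simp [cmodMk, coboundary_coboundary]

lemma cmodMk_coboundary_leastZeroHomotopy {j : ℕ} {c : Finset (Fin k) → PolyC k}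
    (hc : cmodMk (j + 2) (coboundary c) = 0) :
    cmodMk (j + 1) (coboundary (leastZeroHomotopy c)) = cmodMk (j + 1) c := by
  rw [← cmodMk_zero, cmodMk_eq_cmodMk_iff] at hc
  refine cmodMk_eq_cmodMk_iff.mpr fun S hS μ hSμ => ?_
  refine coeff_coboundary_leastZeroHomotopy (card_pos.mp (by omega)) hSμ fun T hT hTμ => ?_
  simpa using hc T (by omega) μ hTμ

theorem dzero_injective : Function.Injective (dzero k) := by
  intro x y hxy
  obtain ⟨p, rfl⟩ := Ideal.Quotient.mk_surjective x
  obtain ⟨q, rfl⟩ := Ideal.Quotient.mk_surjective y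
  rw [dzero_mk, dzero_mk, dstep_cmodMk, dstep_cmodMk, cmodMk_eq_cmodMk_iff] at hxy
  rw [Ideal.Quotient.eq, mem_prodIdeal_iff]
  rintro μ ⟨i, hi⟩
  simpa [coboundary, pos, filter_singleton, sub_eq_zero] using
    hxy {i} (card_singleton i) μ (singleton_subset_iff.mpr hi)

theorem range_dzero : Set.range (dzero k) = Set.range (dstep k 0) := by
  ext x
  constructor
  · rintro ⟨y, rfl⟩
    obtain ⟨q, rfl⟩ := Ideal.Quotient.mk_surjective y
    exact ⟨_, (dzero_mk q).symm⟩
  · rintro ⟨z, rfl⟩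
    obtain ⟨c, rfl⟩ := exists_cmodMk_eq z
    refine ⟨Ideal.Quotient.mk _ (-c ∅), ?_⟩
    rw [dzero_mk, neg_neg]
    congr 1
    funext ⟨S, hS⟩
    obtain rfl := card_eq_zero.mp hS
    rfl

theorem dstep_eq_zero_iff (j : ℕ) (x : Cmod k (j + 1)) :
    dstep k (j + 1) x = 0 ↔ ∃ y, dstep k j y = x := by
  refine ⟨fun hx => ?_, fun ⟨y, hy⟩ => hy ▸ dstep_dstep y⟩
  obtain ⟨c, rfl⟩ := exists_cmodMk_eq x
  rw [dstep_cmodMk] at hx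
  exact ⟨cmodMk j (leastZeroHomotopy c),
    by rw [dstep_cmodMk, cmodMk_coboundary_leastZeroHomotopy hx]⟩

end KoszulComplex

theorem koszul_inclusion_exclusion_exact_general (k : ℕ) :
    Function.Injective (dzero k) ∧
    (∀ x : Cmod k 1, dstep k 1 x = 0 ↔ ∃ y, dzero k y = x) ∧
    (∀ j : ℕ, 1 ≤ j → ∀ x : Cmod k (j + 1),
      dstep k (j + 1) x = 0 ↔ ∃ y : Cmod k j, dstep k j y = x) := by
  refine ⟨dzero_injective, fun x => ?_, fun j _ => dstep_eq_zero_iff j⟩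
  simpa only [← Set.mem_range, range_dzero] using dstep_eq_zero_iff 0 x

/-- The complex
`0 → R/(x₁⋯x_k) → ⊕_{|S|=1} R/I_S → ⊕_{|S|=2} R/I_S → ⋯ → R/I_{{1,…,k}} → 0`
is exact: the first map is injective, the kernel of each differential equals the image of
the previous map (the differential out of the top level being zero, so that the statement
for `j + 1 = k` asserts surjectivity onto `R/I_{{1,…,k}}`). -/
theorem koszul_inclusion_exclusion_exact (k : ℕ) (hk : 1 ≤ k) :
    Function.Injective (dzero k) ∧
    (∀ x : Cmod k 1, dstep k 1 x = 0 ↔ ∃ y, dzero k y = x) ∧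
    (∀ j : ℕ, 1 ≤ j → ∀ x : Cmod k (j + 1),
      dstep k (j + 1) x = 0 ↔ ∃ y : Cmod k j, dstep k j y = x) :=
  koszul_inclusion_exclusion_exact_general k
end
end
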